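/- Let a : ℕ → ℝ be a quasi-additive sequence, i.e. there is D ≥ 0 with |a(m+n) − a(m) − a(n)| ≤ D for all m, n. Then the sequence a(n)/n converges to some limit L ∈ ℝ, and moreover |a(n) − n·L| ≤ D for every n ≥ 1. -/
import Mathlib

section QuasiAdditiveAux

variable (a : ℕ → ℝ) (D : ℝ)

lemma qa_mul (hD : 0 ≤ D) (hqa : ∀ m n : ℕ, |a (m + n) - a m - a n| ≤ D) :
    ∀ k n : ℕ, 1 ≤ k → |a (k * n) - k * a n| ≤ k * D := by
  intro k n hk
  induction k with
  | zero => omega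
  | succ j ih =>
    rcases Nat.eq_or_lt_of_le hk with h1 | h1
    · have hj0 : j = 0 := by omega
      subst hj0
      simp
      positivity
    · have hj : 1 ≤ j := by omega
      have hih := ih hj
      have h2 : |a (j * n + n) - a (j * n) - a n| ≤ D := hqa (j * n) n
      have key : a ((j + 1) * n) - (j + 1 : ℕ) * a n
          = (a (j * n + n) - a (j * n) - a n) + (a (j * n) - j * a n) := by
        rw [show (j + 1) * n = j * n + n from by ring]
        push_cast
        ring
      rw [key]
      calc |(a (j * n + n) - a (j * n) - a n) + (a (j * n) - j * a n)|
          ≤ |a (j * n + n) - a (j * n) - a n| + |a (j * n) - j * a n| := abs_add_le _ _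
        _ ≤ D + j * D := add_le_add h2 hih
        _ = (j + 1 : ℕ) * D := by push_cast; ring

lemma qa_cauchy_est (hD : 0 ≤ D) (hqa : ∀ m n : ℕ, |a (m + n) - a m - a n| ≤ D) :
    ∀ m n : ℕ, 1 ≤ m → 1 ≤ n → |a m / m - a n / n| ≤ D / m + D / n := by
  intro m n hm hn
  have hm' : (0 : ℝ) < m := by exact_mod_cast hm
  have hn' : (0 : ℝ) < n := by exact_mod_cast hn
  have h1 : |a (m * n) - m * a n| ≤ m * D := qa_mul a D hD hqa m n hm
  have h2 : |a (n * m) - n * a m| ≤ n * D := qa_mul a D hD hqa n m hn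
  rw [Nat.mul_comm n m] at h2
  have h3 : |n * a m - m * a n| ≤ m * D + n * D := by
    have := abs_sub (a (m * n) - m * a n) (a (m * n) - n * a m)
    calc |n * a m - m * a n|
        = |(a (m * n) - m * a n) - (a (m * n) - n * a m)| := by ring_nf
      _ ≤ |a (m * n) - m * a n| + |a (m * n) - n * a m| := abs_sub _ _
      _ ≤ m * D + n * D := add_le_add h1 h2
  have key : a m / m - a n / n = (n * a m - m * a n) / (m * n) := by
    field_simp
  rw [key, abs_div, abs_of_pos (by positivity : (0:ℝ) < (m : ℝ) * n)]
  rw [div_le_iff₀ (by positivity)]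
  calc |n * a m - m * a n| ≤ m * D + n * D := h3
    _ = (D / m + D / n) * (m * n) := by field_simp; ring

end QuasiAdditiveAux

/-- Fekete-type lemma: a quasi-additive sequence `a : ℕ → ℝ` with defect `D`
satisfies `a n / n → L` and `|a n - n * L| ≤ D` for all `n ≥ 1`. -/
theorem quasi_additive_limit (a : ℕ → ℝ) (D : ℝ) (hD : 0 ≤ D)
    (hqa : ∀ m n : ℕ, |a (m + n) - a m - a n| ≤ D) :
    ∃ L : ℝ, Filter.Tendsto (fun n : ℕ => a n / n) Filter.atTop (nhds L) ∧
      ∀ n : ℕ, 1 ≤ n → |a n - n * L| ≤ D := by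
  set f : ℕ → ℝ := fun n => a n / n with hf
  have est := qa_cauchy_est a D hD hqa
  -- uniform bound to handle N = 0 in the Cauchy criterion
  set C : ℝ := 4 * D + 2 * |a 1| with hC
  have hbnd : ∀ n : ℕ, |f n| ≤ 2 * D + |a 1| := by
    intro n
    rcases Nat.eq_zero_or_pos n with h | h
    · simp [hf, h]; positivity
    · have h1 : |f n - f 1| ≤ D / n + D / 1 := by simpa [hf] using est n 1 h le_rfl
      have hn' : (1:ℝ) ≤ n := by exact_mod_cast h
      have : D / n ≤ D := by
        rw [div_le_iff₀ (by linarith)]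
        nlinarith
      have hf1 : f 1 = a 1 := by simp [hf]
      calc |f n| ≤ |f n - f 1| + |f 1| := by
            simpa using abs_add_le (f n - f 1) (f 1)
        _ ≤ (D / n + D / 1) + |a 1| := by
            rw [← hf1]; exact add_le_add h1 le_rfl
        _ ≤ 2 * D + |a 1| := by linarith
  have hcauchy : CauchySeq f := by
    apply cauchySeq_of_le_tendsto_0 (fun N : ℕ => 2 * D / N + C / (N + 1))
    · intro n m N hn hm
      rcases Nat.eq_zero_or_pos N with h | h
      · have h1 := hbnd n
        have h2 := hbnd m
        have : dist (f n) (f m) ≤ |f n| + |f m| := by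
          rw [Real.dist_eq]
          exact (abs_sub _ _)
        have hN : (2 * D / (N:ℝ) + C / (N + 1)) = C := by
          simp [h, hC]
        rw [hN, hC]
        linarith
      · have hn1 : 1 ≤ n := le_trans h hn
        have hm1 : 1 ≤ m := le_trans h hm
        have h1 : |f n - f m| ≤ D / n + D / m := est n m hn1 hm1
        have hN' : (0:ℝ) < N := by exact_mod_cast h
        have hdn : D / (n:ℝ) ≤ D / N := by
          apply div_le_div_of_nonneg_left hD hN'
          exact_mod_cast hn
        have hdm : D / (m:ℝ) ≤ D / N := by
          apply div_le_div_of_nonneg_left hD hN'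
          exact_mod_cast hm
        have hCnn : 0 ≤ C / ((N:ℝ) + 1) := by positivity
        rw [Real.dist_eq]
        have : 2 * D / (N:ℝ) = D / N + D / N := by ring
        rw [this]
        linarith
    · have h1 : Filter.Tendsto (fun N : ℕ => 2 * D / (N:ℝ)) Filter.atTop (nhds 0) :=
        tendsto_const_div_atTop_nhds_zero_nat (2 * D)
      have h2 : Filter.Tendsto (fun N : ℕ => C / ((N:ℝ) + 1)) Filter.atTop (nhds 0) := by
        have := (tendsto_const_div_atTop_nhds_zero_nat C).comp
          (Filter.tendsto_add_atTop_nat 1)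
        simpa [Function.comp_def] using this
      simpa using h1.add h2
  obtain ⟨L, hL⟩ := cauchySeq_tendsto_of_complete hcauchy
  refine ⟨L, hL, ?_⟩
  intro n hn
  have hn' : (0:ℝ) < n := by exact_mod_cast hn
  -- subsequence f (j * n) → L
  have hsub : Filter.Tendsto (fun j : ℕ => f (j * n)) Filter.atTop (nhds L) := by
    apply hL.comp
    apply Filter.tendsto_atTop_mono (fun j => Nat.le_mul_of_pos_right j hn)
    exact Filter.tendsto_id
  have hev : ∀ᶠ j : ℕ in Filter.atTop, dist (f (j * n)) (a n / n) ≤ D / n := by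
    filter_upwards [Filter.eventually_ge_atTop 1] with j hj
    have h1 : |a (j * n) - j * a n| ≤ j * D := qa_mul a D hD hqa j n hj
    have hj' : (0:ℝ) < j := by exact_mod_cast hj
    have hjn : (0:ℝ) < ((j * n : ℕ) : ℝ) := by
      push_cast; positivity
    rw [Real.dist_eq]
    have key : f (j * n) - a n / n = (a (j * n) - j * a n) / (j * n) := by
      simp only [hf]
      push_cast
      field_simp
    rw [key, abs_div, abs_of_pos (by positivity : (0:ℝ) < (j:ℝ) * n)]
    rw [div_le_div_iff₀ (by positivity) hn']
    calc |a (j * n) - j * a n| * n ≤ (j * D) * n := by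
          apply mul_le_mul_of_nonneg_right h1 (le_of_lt hn')
      _ = D * (j * n) := by ring
  have hlim : dist L (a n / n) ≤ D / n := by
    have hd : Filter.Tendsto (fun j : ℕ => dist (f (j * n)) (a n / n))
        Filter.atTop (nhds (dist L (a n / n))) :=
      hsub.dist tendsto_const_nhds
    exact le_of_tendsto hd hev
  have : |a n / n - L| ≤ D / n := by
    rw [abs_sub_comm]
    simpa [Real.dist_eq] using hlim
  have key : a n - n * L = n * (a n / n - L) := by
    field_simp
  rw [key, abs_mul, abs_of_pos hn']
  calc (n:ℝ) * |a n / n - L| ≤ n * (D / n) := by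
        exact mul_le_mul_of_nonneg_left this (le_of_lt hn')
    _ = D := by field_simp
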